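/- arXiv:2601.01421 — 3 statements merged into one kernel-verified Lean document; each statement's English description precedes it below -/
import Mathlib

section
/- Let c be a choice function on a finite nonempty set X that violates WARP under constant selection, and let S be the set of all items x* ∈ X such that every reversal (A, B) of c satisfies c(A) = x* or c(B) = x*. Let ▷ be any strict linear order on X such that ▷ ≠ ▷^{c,x*} for every x* ∈ S (where ▷^{c,x*} is defined by: x* ▷^{c,x*} y for every y ≠ x*, and for distinct y, z ≠ x*, y ▷^{c,x*} z iff there is a menu A with x* ∉ A, z ∈ A and y = c(A)). Then every rationalization by self-punishment Harm_c(▷) of c by ▷ satisfies max{ i : ▷_i ∈ Harm_c(▷) } > 1. -/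
variable {X : Type*}

/-- A strict linear order: asymmetric, transitive, complete. -/
def IsSLO (r : X → X → Prop) : Prop :=
  (∀ a b : X, r a b → ¬ r b a) ∧ (∀ a b d : X, r a b → r b d → r a d) ∧
    (∀ a b : X, a ≠ b → r a b ∨ r b a)

/-- The set of the top `i` elements of `X` with respect to `r`
(those with fewer than `i` elements strictly above them). -/
def topSet (r : X → X → Prop) (i : ℕ) : Set X := {a | Set.ncard {b | r b a} < i}

/-- The `i`-th harmful distortion of `r`: the top `i` elements are moved,
in reverse order, below all the other elements. -/
def harmful (r : X → X → Prop) (i : ℕ) : X → X → Prop := fun a b =>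
  (b ∈ topSet r i ∧ (a ∈ topSet r i → r b a)) ∨
    (a ∉ topSet r i ∧ b ∉ topSet r i ∧ r a b)

/-- A choice function selects an element from every nonempty menu. -/
def IsChoice (c : Finset X → X) : Prop := ∀ A : Finset X, A.Nonempty → c A ∈ A

/-- `x` is the `r`-maximum of the menu `A`. -/
def IsMaxOf (r : X → X → Prop) (A : Finset X) (x : X) : Prop :=
  x ∈ A ∧ ∀ y ∈ A, y ≠ x → r x y

/-- A reversal (violation of WARP) of `c`. -/
def IsReversal [DecidableEq X] (c : Finset X → X) (A B : Finset X) : Prop :=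
  A.Nonempty ∧ B.Nonempty ∧ A ≠ B ∧ c A ≠ c B ∧ c A ∈ A ∩ B ∧ c B ∈ A ∩ B

/-- `I` is (the index set of) a rationalization by self-punishment of `c` by `r`. -/
def RSP [Fintype X] (c : Finset X → X) (r : X → X → Prop) (I : Finset ℕ) : Prop :=
  I.Nonempty ∧ (∀ i ∈ I, i ≤ Fintype.card X - 1) ∧
    ∀ A : Finset X, A.Nonempty → ∃ i ∈ I, IsMaxOf (harmful r i) A (c A)

/-- The degree of self-punishment of `c`: the minimum over all strict linear orders `r`
and all rationalizations by self-punishment of `c` by `r` of the maximal index used. -/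
noncomputable def sp [Fintype X] (c : Finset X → X) : ℕ :=
  sInf { m : ℕ | ∃ r : X → X → Prop, IsSLO r ∧ ∃ I : Finset ℕ,
    RSP c r I ∧ m ∈ I ∧ ∀ i ∈ I, i ≤ m }

/-- `c` is inconsistent: every ordered pair of distinct items is selected in some reversal. -/
def Inconsistent [DecidableEq X] (c : Finset X → X) : Prop :=
  ∀ x y : X, x ≠ y → ∃ A B : Finset X, IsReversal c A B ∧ c A = x ∧ c B = y

/-- The revealed preference `▷^{c,x}`. -/
def cxPref (c : Finset X → X) (x : X) : X → X → Prop := fun y z =>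
  (y = x ∧ z ≠ x) ∨
    (y ≠ x ∧ z ≠ x ∧ y ≠ z ∧ ∃ A : Finset X, x ∉ A ∧ z ∈ A ∧ c A = y)

/-- `c` violates WARP under constant nonreciprocal selection of `j` items. -/
def ViolatesCNS [Fintype X] [DecidableEq X] (c : Finset X → X) (j : ℕ) : Prop :=
  (∀ D : Finset X, D.card < j → ∃ A B : Finset X, IsReversal c A B ∧ c A ∉ D ∧ c B ∉ D) ∧
    ∃ xs : Finset X, xs.card = j ∧
      (∀ A B : Finset X, IsReversal c A B → c A ∈ xs ∨ c B ∈ xs) ∧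
      (∀ x ∈ xs, ∃ A B : Finset X, ∃ y : X, IsReversal c A B ∧ y ∉ xs ∧
        ((c A = x ∧ c B = y) ∨ (c A = y ∧ c B = x)))

/-- The relation `▷^c` built from the witnesses `x 1, …, x j`. -/
def witnessPref (c : Finset X → X) (x : ℕ → X) (j : ℕ) : X → X → Prop := fun y z =>
  (∃ g h : ℕ, 1 ≤ g ∧ g < h ∧ h ≤ j ∧ y = x g ∧ z = x h) ∨
    ((∀ g : ℕ, 1 ≤ g → g ≤ j → y ≠ x g) ∧ (∀ g : ℕ, 1 ≤ g → g ≤ j → z ≠ x g) ∧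
      ∃ A : Finset X, z ∈ A ∧ c A = y) ∨
    ((∃ g : ℕ, 1 ≤ g ∧ g ≤ j ∧ y = x g) ∧ (∀ g : ℕ, 1 ≤ g → g ≤ j → z ≠ x g))


/-! If every index of a rationalization is at most 1, then `▷_0` and `▷_1` both agree with `▷`
on comparisons with any item below the `▷`-top `m`. Hence every choice `c A ≠ m` is the
`▷`-maximum of `A \ {m}`: no reversal avoids `m`, and the revealed preference `▷^{c,m}` is `▷`. -/

theorem IsSLO.irrefl {r : X → X → Prop} (hr : IsSLO r) (a : X) : ¬ r a a :=
  fun h => hr.1 a a h h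

theorem IsSLO.exists_top [Finite X] [Nonempty X] {r : X → X → Prop} (hr : IsSLO r) :
    ∃ m, ∀ b, b ≠ m → r m b := by
  have : IsTrans X r := ⟨hr.2.1⟩
  have : Std.Irrefl r := ⟨hr.irrefl⟩
  obtain ⟨m, -, hm⟩ :=
    (Finite.wellFounded_of_trans_of_irrefl r).has_min Set.univ Set.univ_nonempty
  exact ⟨m, fun b hb => (hr.2.2 m b hb.symm).resolve_right (hm b trivial)⟩

theorem topSet_mono (r : X → X → Prop) {i j : ℕ} (h : i ≤ j) : topSet r i ⊆ topSet r j :=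
  fun _ ha => lt_of_lt_of_le ha h

theorem notMem_topSet_one [Finite X] {r : X → X → Prop} {a b : X} (hab : r a b) :
    b ∉ topSet r 1 := fun hb =>
  ((Set.ncard_pos (Set.toFinite _)).mpr ⟨a, hab⟩).ne' (Nat.lt_one_iff.mp hb)

theorem rel_of_harmful_of_le_one [Finite X] {r : X → X → Prop} {i : ℕ} {a b c : X}
    (hi : i ≤ 1) (hcb : r c b) (h : harmful r i a b) : r a b := by
  have hb : b ∉ topSet r i := fun hb => notMem_topSet_one hcb (topSet_mono r hi hb)
  rcases h with ⟨hb', -⟩ | ⟨-, -, hab⟩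
  · exact absurd hb' hb
  · exact hab

section RSPOfLeOne

variable [Fintype X] {c : Finset X → X} {r : X → X → Prop} {I : Finset ℕ} {m : X}

theorem rel_choice_of_rsp (hI : RSP c r I) (hI1 : ∀ i ∈ I, i ≤ 1) (hm : ∀ b, b ≠ m → r m b)
    {A : Finset X} {y : X} (hy : y ∈ A) (hyc : y ≠ c A) (hym : y ≠ m) : r (c A) y := by
  obtain ⟨i, hi, hmax⟩ := hI.2.2 A ⟨y, hy⟩
  exact rel_of_harmful_of_le_one (hI1 i hi) (hm y hym) (hmax.2 y hy hyc)

theorem IsReversal.choice_eq_top_of_rsp [DecidableEq X] (hr : IsSLO r) (hI : RSP c r I)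
    (hI1 : ∀ i ∈ I, i ≤ 1) (hm : ∀ b, b ≠ m → r m b) {A B : Finset X}
    (hAB : IsReversal c A B) : c A = m ∨ c B = m := by
  by_contra! h
  obtain ⟨-, -, -, hne, hcA, hcB⟩ := hAB
  exact hr.1 _ _ (rel_choice_of_rsp hI hI1 hm (Finset.mem_inter.mp hcB).1 hne.symm h.2)
    (rel_choice_of_rsp hI hI1 hm (Finset.mem_inter.mp hcA).2 hne h.1)

theorem choice_pair_of_rsp [DecidableEq X] (hc : IsChoice c) (hr : IsSLO r) (hI : RSP c r I)
    (hI1 : ∀ i ∈ I, i ≤ 1) (hm : ∀ b, b ≠ m → r m b) {y z : X} (hyz : r y z) (hy : y ≠ m) :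
    c {y, z} = y := by
  rcases Finset.mem_insert.mp (hc {y, z} (Finset.insert_nonempty _ _)) with h | h
  · exact h
  · rw [Finset.mem_singleton] at h
    have hne : y ≠ c {y, z} := fun hy' => hr.irrefl y (by rwa [← h, ← hy'] at hyz)
    have hzy := rel_choice_of_rsp hI hI1 hm (Finset.mem_insert_self y {z}) hne hy
    exact absurd (h ▸ hzy) (hr.1 _ _ hyz)

theorem eq_cxPref_of_rsp [DecidableEq X] (hc : IsChoice c) (hr : IsSLO r) (hI : RSP c r I)
    (hI1 : ∀ i ∈ I, i ≤ 1) (hm : ∀ b, b ≠ m → r m b) : r = cxPref c m := by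
  funext y z
  apply propext
  constructor
  · intro h
    by_cases hy : y = m
    · exact Or.inl ⟨hy, by rintro rfl; exact hr.irrefl _ (hy ▸ h)⟩
    · have hz : z ≠ m := by rintro rfl; exact hr.1 _ _ h (hm y hy)
      have hyz : y ≠ z := by rintro rfl; exact hr.irrefl y h
      exact Or.inr ⟨hy, hz, hyz, {y, z}, by simp [Ne.symm hy, Ne.symm hz], by simp,
        choice_pair_of_rsp hc hr hI hI1 hm h hy⟩
  · rintro (⟨rfl, hz⟩ | ⟨-, hz, hyz, A, -, hzA, rfl⟩)
    · exact hm z hz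
    · exact rel_choice_of_rsp hI hI1 hm hzA hyz.symm hz

end RSPOfLeOne

theorem stmt6_general [Fintype X] [DecidableEq X] (c : Finset X → X) (hc : IsChoice c)
    (hex : ∃ x : X, ∀ A B : Finset X, IsReversal c A B → c A = x ∨ c B = x)
    (r : X → X → Prop) (hr : IsSLO r)
    (hne : ∀ x : X, (∀ A B : Finset X, IsReversal c A B → c A = x ∨ c B = x) →
      r ≠ cxPref c x) :
    ∀ I : Finset ℕ, RSP c r I → ∃ i ∈ I, 1 < i := by
  intro I hI
  by_contra! hI1
  obtain ⟨x, -⟩ := hex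
  have : Nonempty X := ⟨x⟩
  obtain ⟨m, hm⟩ := hr.exists_top
  exact hne m (fun _ _ hAB => hAB.choice_eq_top_of_rsp hr hI hI1 hm)
    (eq_cxPref_of_rsp hc hr hI hI1 hm)

theorem stmt6 [Fintype X] [DecidableEq X] (c : Finset X → X) (hc : IsChoice c)
    (hrev : ∃ A B : Finset X, IsReversal c A B)
    (hex : ∃ x : X, ∀ A B : Finset X, IsReversal c A B → c A = x ∨ c B = x)
    (r : X → X → Prop) (hr : IsSLO r)
    (hne : ∀ x : X, (∀ A B : Finset X, IsReversal c A B → c A = x ∨ c B = x) →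
      r ≠ cxPref c x) :
    ∀ I : Finset ℕ, RSP c r I → ∃ i ∈ I, 1 < i :=
  stmt6_general c hc hex r hr hne
end

section
/- Let c be a choice function on a finite nonempty set X, let ▷ be a strict linear order on X, and let Harm_c(▷) be a rationalization by self-punishment of c by ▷ such that max{ i : ▷_i ∈ Harm_c(▷) } = 1. Then the ▷-maximum element max(X, ▷) is constantly selected in reversals: every reversal (A, B) of c satisfies c(A) = max(X, ▷) or c(B) = max(X, ▷). -/
variable {X : Type*}

/-! The distortions `▷_0 = ▷` and `▷_1` differ only in where they put the `▷`-maximum `m`,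
so if `c` is rationalized by them, any choice `c A ≠ m` is `▷`-above every other item of `A`
except `m`. In a reversal `(A, B)` avoiding `m`, `c A` and `c B` would then each be `▷`-above the
other. -/

section SelfPunishment

variable {r : X → X → Prop}

theorem topSet_zero : topSet r 0 = ∅ :=
  Set.eq_empty_of_forall_notMem fun _ h => Nat.not_lt_zero _ h

theorem eq_of_mem_topSet_one [Fintype X] {m : X} (hm : IsMaxOf r Finset.univ m) {x : X}
    (hx : x ∈ topSet r 1) : x = m := by
  by_contra hxm
  have hnone : {b | r b x} = ∅ := (Set.ncard_eq_zero (Set.toFinite _)).mp (Nat.lt_one_iff.mp hx)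
  exact hnone.subset (hm.2 x (Finset.mem_univ x) hxm)

theorem topSet_subset_of_le_one [Fintype X] {m : X} (hm : IsMaxOf r Finset.univ m) {i : ℕ}
    (hi : i ≤ 1) : topSet r i ⊆ {m} := by
  interval_cases i
  · simp [topSet_zero]
  · exact fun x hx => eq_of_mem_topSet_one hm hx

theorem harmful_iff_of_notMem_topSet {i : ℕ} {a b : X} (hb : b ∉ topSet r i) :
    harmful r i a b ↔ a ∉ topSet r i ∧ r a b := by
  simp [harmful, hb]

theorem rel_choice_of_RSP_le_one [Fintype X] {c : Finset X → X} {I : Finset ℕ}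
    (hI : RSP c r I) (hmax : ∀ i ∈ I, i ≤ 1) {m : X} (hm : IsMaxOf r Finset.univ m)
    {A : Finset X} (hA : A.Nonempty) {y : X} (hy : y ∈ A) (hyc : y ≠ c A) (hym : y ≠ m) :
    r (c A) y := by
  obtain ⟨i, hiI, hcA⟩ := hI.2.2 A hA
  have hytop : y ∉ topSet r i := fun h => hym (topSet_subset_of_le_one hm (hmax i hiI) h)
  exact ((harmful_iff_of_notMem_topSet hytop).mp (hcA.2 y hy hyc)).2

end SelfPunishment

theorem stmt8_general [Fintype X] [DecidableEq X] (c : Finset X → X)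
    (r : X → X → Prop) (hr : IsSLO r)
    (I : Finset ℕ) (hI : RSP c r I) (hmax : ∀ i ∈ I, i ≤ 1)
    (m : X) (hm : IsMaxOf r Finset.univ m) :
    ∀ A B : Finset X, IsReversal c A B → c A = m ∨ c B = m := by
  rintro A B ⟨hA, hB, -, hne, hcA, hcB⟩
  by_contra! h
  have hAB : r (c A) (c B) :=
    rel_choice_of_RSP_le_one hI hmax hm hA (Finset.mem_inter.mp hcB).1 hne.symm h.2
  have hBA : r (c B) (c A) :=
    rel_choice_of_RSP_le_one hI hmax hm hB (Finset.mem_inter.mp hcA).2 hne h.1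
  exact hr.1 _ _ hAB hBA

theorem stmt8 [Fintype X] [DecidableEq X] (c : Finset X → X) (hc : IsChoice c)
    (r : X → X → Prop) (hr : IsSLO r)
    (I : Finset ℕ) (hI : RSP c r I) (h1 : 1 ∈ I) (hmax : ∀ i ∈ I, i ≤ 1)
    (m : X) (hm : IsMaxOf r Finset.univ m) :
    ∀ A B : Finset X, IsReversal c A B → c A = m ∨ c B = m :=
  stmt8_general c r hr I hI hmax m hm
end

section
/- Let c be a choice function on a finite nonempty set X, let ▷ be a strict linear order on X with X = {x^▷_1, …, x^▷_{|X|}} enumerated in decreasing ▷-order, and let Harm_c(▷) be a rationalization by self-punishment of c by ▷ with max{ i : ▷_i ∈ Harm_c(▷) } = j for some 0 ≤ j ≤ |X|−1. Fix h ∈ {1, …, j}, let C_{x^▷_h} = ⋃ { A : A is a menu with c(A) = x^▷_h }, assume C_{x^▷_h} ∩ { y : x^▷_j ▷ y } is nonempty, and let l ∈ {j+1, …, |X|} be the index with x^▷_l = max( C_{x^▷_h} ∩ { y : x^▷_j ▷ y }, ▷ ). If there is no reversal (A_h, B_h) of c such that either x^▷_h = c(A_h) and y_h = c(B_h), or y_h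 = c(A_h) and x^▷_h = c(B_h), for some y_h ∈ X \ {x^▷_1, …, x^▷_j}, then for every menu D with x^▷_h, x^▷_m ∈ D and l ≤ m ≤ |X|, one has c(D) ≠ x^▷_m. -/
variable {X : Type*}

/-! Suppose `c D = x_m`. Look at the menu `G = {x_h, x_l, x_m}`. Choosing `x_l` from `G`
would form a reversal with a menu of `C_{x_h}` containing `x_l`, and choosing `x_h` would form
one with `D`; both are excluded. So `c G = x_m`, which must then be the maximum of `G` for some
distortion `▷_i` with `i ≤ j`. But `x_l` and `x_m` lie below the top `j` elements, where every
such distortion agrees with `▷`, and `x_l ▷ x_m`. -/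

section Chain

variable {r : X → X → Prop} {e : ℕ → X} {n : ℕ}

lemma chain_apply_ne (hirr : ∀ a, ¬ r a a)
    (hord : ∀ a b : ℕ, 1 ≤ a → a < b → b ≤ n → r (e a) (e b))
    {a b : ℕ} (ha : 1 ≤ a) (hab : a < b) (hb : b ≤ n) : e a ≠ e b :=
  fun heq => hirr _ (heq ▸ hord a b ha hab hb)

lemma chain_injOn (hirr : ∀ a, ¬ r a a)
    (hord : ∀ a b : ℕ, 1 ≤ a → a < b → b ≤ n → r (e a) (e b)) :
    Set.InjOn e (Set.Icc 1 n) := by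
  intro a ha b hb hab
  by_contra hne
  rcases lt_or_gt_of_ne hne with hlt | hlt
  · exact chain_apply_ne hirr hord ha.1 hlt hb.2 hab
  · exact chain_apply_ne hirr hord hb.1 hlt ha.2 hab.symm

lemma le_ncard_above_chain [Finite X] (hirr : ∀ a, ¬ r a a)
    (hord : ∀ a b : ℕ, 1 ≤ a → a < b → b ≤ n → r (e a) (e b))
    {k : ℕ} (hk : k ≤ n) : k - 1 ≤ {b | r b (e k)}.ncard :=
  calc k - 1 = (e '' Set.Icc 1 (k - 1)).ncard := by
        rw [((chain_injOn hirr hord).mono (Set.Icc_subset_Icc_right (by omega))).ncard_image,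
          Set.ncard_Icc_nat]
        omega
    _ ≤ {b | r b (e k)}.ncard :=
        Set.ncard_le_ncard (by rintro _ ⟨g, ⟨hg1, hg2⟩, rfl⟩; exact hord g k hg1 (by omega) hk)

lemma chain_not_mem_topSet [Finite X] (hirr : ∀ a, ¬ r a a)
    (hord : ∀ a b : ℕ, 1 ≤ a → a < b → b ≤ n → r (e a) (e b))
    {i k : ℕ} (hik : i < k) (hk : k ≤ n) : e k ∉ topSet r i := fun hmem => by
  have hlt : {b | r b (e k)}.ncard < i := hmem
  have := le_ncard_above_chain hirr hord hk
  omega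

end Chain

lemma rel_of_harmful {r : X → X → Prop} {i : ℕ} {a b : X} (hb : b ∉ topSet r i)
    (h : harmful r i a b) : r a b := by
  rcases h with ⟨hb', -⟩ | ⟨-, -, hab⟩
  exacts [absurd hb' hb, hab]

lemma isReversal_of_mem [DecidableEq X] {c : Finset X → X} {A B : Finset X}
    (hA : c A ∈ A) (hB : c B ∈ B) (hAB : c A ∈ B) (hBA : c B ∈ A) (hne : c A ≠ c B) :
    IsReversal c A B :=
  ⟨⟨_, hA⟩, ⟨_, hB⟩, fun h => hne (h ▸ rfl), hne,
    Finset.mem_inter.2 ⟨hA, hAB⟩, Finset.mem_inter.2 ⟨hBA, hB⟩⟩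

theorem stmt11_general [Fintype X] [DecidableEq X] (c : Finset X → X) (hc : IsChoice c)
    (r : X → X → Prop) (hr : IsSLO r)
    (e : ℕ → X)
    (hord : ∀ h i : ℕ, 1 ≤ h → h < i → i ≤ Fintype.card X → r (e h) (e i))
    (j : ℕ)
    (I : Finset ℕ) (hI : RSP c r I) (hmax : ∀ i ∈ I, i ≤ j)
    (h : ℕ) (hh1 : 1 ≤ h) (hhj : h ≤ j)
    (l : ℕ) (hl1 : j < l) (hl2 : l ≤ Fintype.card X)
    (hlC : ∃ A : Finset X, A.Nonempty ∧ c A = e h ∧ e l ∈ A)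
    -- there is no reversal selecting `e h` against some item outside `{x_1,…,x_j}`:
    (hnorev : ¬ ∃ A B : Finset X, IsReversal c A B ∧ ∃ y : X,
      (∀ g : ℕ, 1 ≤ g → g ≤ j → y ≠ e g) ∧
      ((c A = e h ∧ c B = y) ∨ (c A = y ∧ c B = e h))) :
    ∀ D : Finset X, D.Nonempty → e h ∈ D →
      ∀ m : ℕ, l ≤ m → m ≤ Fintype.card X → e m ∈ D → c D ≠ e m := by
  rintro D - hhD m hlm hm hmD hcD
  obtain ⟨A, hA, hcA, hlA⟩ := hlC
  have hirr : ∀ a, ¬ r a a := fun a ha => hr.1 a a ha ha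
  have hout : ∀ k, j < k → k ≤ Fintype.card X → ∀ g, 1 ≤ g → g ≤ j → e k ≠ e g :=
    fun k hk hkn g hg1 hg2 => (chain_apply_ne hirr hord hg1 (by omega) hkn).symm
  have hhl : e h ≠ e l := chain_apply_ne hirr hord hh1 (by omega) hl2
  have hhm : e h ≠ e m := chain_apply_ne hirr hord hh1 (by omega) hm
  set G : Finset X := {e h, e l, e m}
  obtain ⟨i, hiI, hGmax⟩ := hI.2.2 G ⟨e h, by simp [G]⟩
  have hGl : c G ≠ e l := fun hGl => hnorev ⟨A, G,
    isReversal_of_mem (hcA ▸ hc A hA) hGmax.1 (by simp [G, hcA]) (hGl ▸ hlA)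
      (by rw [hcA, hGl]; exact hhl),
    e l, hout l hl1 hl2, Or.inl ⟨hcA, hGl⟩⟩
  have hGh : c G ≠ e h := fun hGh => hnorev ⟨G, D,
    isReversal_of_mem hGmax.1 (hcD ▸ hmD) (hGh ▸ hhD) (by simp [G, hcD])
      (by rw [hGh, hcD]; exact hhm),
    e m, hout m (by omega) hm, Or.inl ⟨hGh, hcD⟩⟩
  have hGm : c G = e m := by simpa [G, hGh, hGl] using hGmax.1
  have hlm' : l < m := lt_of_le_of_ne hlm (by rintro rfl; exact hGl hGm)
  -- `e l` is not among the top `i ≤ j` elements, so `harmful r i` can put `e m` above it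
  -- only if `r` does.
  have hml : harmful r i (e m) (e l) := hGm ▸ hGmax.2 (e l) (by simp [G]) (Ne.symm (hGm ▸ hGl))
  exact hr.1 _ _ (hord l m (by omega) hlm' hm)
    (rel_of_harmful (chain_not_mem_topSet hirr hord (by linarith [hmax i hiI]) hl2) hml)

theorem stmt11 [Fintype X] [DecidableEq X] (c : Finset X → X) (hc : IsChoice c)
    (r : X → X → Prop) (hr : IsSLO r)
    (e : ℕ → X)
    (hsurj : ∀ x : X, ∃ h : ℕ, 1 ≤ h ∧ h ≤ Fintype.card X ∧ e h = x)
    (hord : ∀ h i : ℕ, 1 ≤ h → h < i → i ≤ Fintype.card X → r (e h) (e i))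
    (j : ℕ) (hj : j ≤ Fintype.card X - 1)
    (I : Finset ℕ) (hI : RSP c r I) (hjI : j ∈ I) (hmax : ∀ i ∈ I, i ≤ j)
    (h : ℕ) (hh1 : 1 ≤ h) (hhj : h ≤ j)
    (l : ℕ) (hl1 : j < l) (hl2 : l ≤ Fintype.card X)
    -- `e l` is the `r`-maximum of `C_{x_h} ∩ {y : x_j ▷ y}`:
    (hlC : ∃ A : Finset X, A.Nonempty ∧ c A = e h ∧ e l ∈ A)
    (hljr : r (e j) (e l))
    (hlmax : ∀ y : X, (∃ A : Finset X, A.Nonempty ∧ c A = e h ∧ y ∈ A) →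
      r (e j) y → y ≠ e l → r (e l) y)
    -- there is no reversal selecting `e h` against some item outside `{x_1,…,x_j}`:
    (hnorev : ¬ ∃ A B : Finset X, IsReversal c A B ∧ ∃ y : X,
      (∀ g : ℕ, 1 ≤ g → g ≤ j → y ≠ e g) ∧
      ((c A = e h ∧ c B = y) ∨ (c A = y ∧ c B = e h))) :
    ∀ D : Finset X, D.Nonempty → e h ∈ D →
      ∀ m : ℕ, l ≤ m → m ≤ Fintype.card X → e m ∈ D → c D ≠ e m :=
  stmt11_general c hc r hr e hord j I hI hmax h hh1 hhj l hl1 hl2 hlC hnorev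
end
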